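/- arXiv:0909.3826 — 3 statements merged into one kernel-verified Lean document; each statement's English description precedes it below -/
import Mathlib

section
/- For every integer k ≥ 3, the cost function (x,y) ↦ c₁(x,y) is not continuous on ℝ² × ℝ². -/
open MeasureTheory intervalIntegral

noncomputable section

/-- The set of achievable costs for the planar control system
`ẋ₁ = u₁`, `ẋ₂ = x₁² + u₂ x₁^k` with Lagrangian `½(u₁² + u₂²)`, over essentially
bounded measurable controls and absolutely continuous trajectories (encoded by the
integral formulation of the ODE) joining `a` to `b` in time `T`. -/
def planarCostSet (k : ℕ) (T : ℝ) (a b : ℝ × ℝ) : Set ℝ :=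
  {r : ℝ | ∃ u₁ u₂ x₁ x₂ : ℝ → ℝ,
    Measurable u₁ ∧ Measurable u₂ ∧
    (∃ C : ℝ, ∀ᵐ t ∂(volume : Measure ℝ), t ∈ Set.Icc 0 T → |u₁ t| ≤ C ∧ |u₂ t| ≤ C) ∧
    ContinuousOn x₁ (Set.Icc 0 T) ∧ ContinuousOn x₂ (Set.Icc 0 T) ∧
    x₁ 0 = a.1 ∧ x₂ 0 = a.2 ∧ x₁ T = b.1 ∧ x₂ T = b.2 ∧
    (∀ t ∈ Set.Icc (0:ℝ) T, x₁ t = x₁ 0 + ∫ s in (0:ℝ)..t, u₁ s) ∧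
    (∀ t ∈ Set.Icc (0:ℝ) T, x₂ t = x₂ 0 + ∫ s in (0:ℝ)..t, (x₁ s ^ 2 + u₂ s * x₁ s ^ k)) ∧
    r = (1 / 2) * ∫ t in (0:ℝ)..T, (u₁ t ^ 2 + u₂ t ^ 2)}

/-- The optimal control cost `c_T(a,b)` for the planar system of Section 2. -/
def planarCost (k : ℕ) (T : ℝ) (a b : ℝ × ℝ) : ℝ :=
  sInf (planarCostSet k T a b)

/-!
The cost from `(0,0)` to itself is `0`, while every trajectory from `(0,0)` to `(0,-ε)` costs at
least `1/4`, however small `ε > 0` is. Write `P = ∫ u₁²`, `Q = ∫ u₂²`, `A = ∫ x₁²` and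
`m = max x₁²`. By Cauchy–Schwarz, `x₁` is `½`-Hölder with constant `√P`; hence `m ≤ P`, and `x₁²`
stays above `m/4` on an interval of length `m/(4P)`, so `m² ≤ 16PA`. Reaching `x₂ = -ε` forces
`∫ u₂ x₁ᵏ = -(A + ε)`, and Cauchy–Schwarz gives `(A + ε)² ≤ Q m^(k-1) A`, hence `A ≤ Q m^(k-1)`.
Together, `1 ≤ 16PQ m^(k-3) ≤ 4(P+Q)^(k-1)`, which for `k ≥ 3` forces `P + Q ≥ 1/2`.
-/

open Set Filter Topology

lemma sq_integral_mul_le_mul_integral_sq {f g : ℝ → ℝ} {a b : ℝ} (hab : a ≤ b)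
    (hf : IntervalIntegrable (fun x => f x ^ 2) volume a b)
    (hg : IntervalIntegrable (fun x => g x ^ 2) volume a b)
    (hfg : IntervalIntegrable (fun x => f x * g x) volume a b) :
    (∫ x in a..b, f x * g x) ^ 2 ≤ (∫ x in a..b, f x ^ 2) * ∫ x in a..b, g x ^ 2 := by
  have hquad : ∀ l : ℝ, 0 ≤ (∫ x in a..b, f x ^ 2) * (l * l)
      + 2 * (∫ x in a..b, f x * g x) * l + ∫ x in a..b, g x ^ 2 := by
    intro l
    have hexp : ∫ x in a..b, (l * f x + g x) ^ 2 = (∫ x in a..b, f x ^ 2) * (l * l)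
        + 2 * (∫ x in a..b, f x * g x) * l + ∫ x in a..b, g x ^ 2 := by
      have hpt : ∀ x, (l * f x + g x) ^ 2 = (l * l) * f x ^ 2 + (2 * l) * (f x * g x) + g x ^ 2 :=
        fun x => by ring
      simp_rw [hpt]
      rw [integral_add ((hf.const_mul _).add (hfg.const_mul _)) hg,
        integral_add (hf.const_mul _) (hfg.const_mul _), intervalIntegral.integral_const_mul,
        intervalIntegral.integral_const_mul]
      ring
    exact hexp ▸ integral_nonneg hab fun x _ => sq_nonneg _
  have := discrim_le_zero hquad
  rw [discrim] at this
  linarith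

lemma sq_integral_le_mul_integral_sq {u : ℝ → ℝ} {a b : ℝ} (hab : a ≤ b)
    (hu : IntervalIntegrable u volume a b)
    (hu2 : IntervalIntegrable (fun x => u x ^ 2) volume a b) :
    (∫ x in a..b, u x) ^ 2 ≤ (b - a) * ∫ x in a..b, u x ^ 2 := by
  have := sq_integral_mul_le_mul_integral_sq (g := fun _ => 1) hab hu2 intervalIntegrable_const
    (by simpa using hu)
  simpa [hab, mul_comm] using this

lemma intervalIntegrable_of_ae_abs_le {f : ℝ → ℝ} {a b C : ℝ} (hab : a ≤ b)
    (hf : Measurable f) (hC : ∀ᵐ t, t ∈ Icc a b → |f t| ≤ C) :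
    IntervalIntegrable f volume a b := by
  refine IntervalIntegrable.mono_fun' (g := fun _ => C) intervalIntegrable_const
    hf.aestronglyMeasurable ?_
  rw [uIoc_of_le hab, Filter.EventuallyLE, ae_restrict_iff' measurableSet_Ioc]
  filter_upwards [hC] with t ht hmem using ht (Ioc_subset_Icc_self hmem)

lemma pow_four_le_mul_integral_sq {f : ℝ → ℝ} {a b t₀ P : ℝ} (hf : ContinuousOn f (Icc a b))
    (hfa : f a = 0) (ht₀ : t₀ ∈ Icc a b) (hP : 0 ≤ P)
    (hmod : ∀ s ∈ Icc a t₀, (f t₀ - f s) ^ 2 ≤ P * (t₀ - s)) :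
    f t₀ ^ 4 ≤ 16 * P * ∫ t in a..b, f t ^ 2 := by
  have hab : a ≤ b := ht₀.1.trans ht₀.2
  have hint : IntervalIntegrable (fun t => f t ^ 2) volume a b :=
    (hf.pow 2).intervalIntegrable_of_Icc hab
  have hnonneg : 0 ≤ ∫ t in a..b, f t ^ 2 := integral_nonneg hab fun t _ => sq_nonneg _
  set y := f t₀
  rcases eq_or_ne y 0 with hy | hy
  · rw [hy, zero_pow (by norm_num)]
    exact mul_nonneg (by positivity) hnonneg
  have hya : y ^ 2 ≤ P * (t₀ - a) := by simpa [hfa] using hmod a ⟨le_rfl, ht₀.1⟩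
  have hPpos : 0 < P := by
    by_contra h
    nlinarith [pow_pos (abs_pos.2 hy) 2, sq_abs y, ht₀.1]
  -- on `[t₀ - w, t₀]` the Hölder bound keeps `f` at least half as large as at `t₀`
  set w := y ^ 2 / (4 * P) with hw_def
  have hPw : P * w = y ^ 2 / 4 := by rw [hw_def]; field_simp
  have hw : 0 ≤ w ∧ w ≤ t₀ - a := by
    refine ⟨by positivity, ?_⟩
    rw [hw_def, div_le_iff₀ (by positivity)]
    nlinarith
  have hwin : ∀ s ∈ Icc (t₀ - w) t₀, y ^ 2 / 4 ≤ f s ^ 2 := by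
    intro s hs
    have h := (hmod s ⟨by linarith [hs.1, hw.2], hs.2⟩).trans
      (mul_le_mul_of_nonneg_left (by linarith [hs.1] : t₀ - s ≤ w) hP)
    rw [hPw] at h
    nlinarith [sq_nonneg (y - 2 * f s), sq_nonneg (y + f s), sq_nonneg (3 * y - 2 * f s)]
  have hsub : uIcc (t₀ - w) t₀ ⊆ uIcc a b := by
    rw [uIcc_of_le hab, uIcc_of_le (show t₀ - w ≤ t₀ by linarith [hw.1])]
    exact Icc_subset_Icc (by linarith [hw.2]) ht₀.2
  calc y ^ 4 = 16 * (P * w) * (y ^ 2 / 4) := by rw [hPw]; ring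
    _ = 16 * P * ∫ _ in (t₀ - w)..t₀, y ^ 2 / 4 := by
        rw [intervalIntegral.integral_const, smul_eq_mul, sub_sub_cancel]; ring
    _ ≤ 16 * P * ∫ t in (t₀ - w)..t₀, f t ^ 2 := by
        gcongr
        exact integral_mono_on (by linarith [hw.1]) intervalIntegrable_const
          (hint.mono_set hsub) hwin
    _ ≤ 16 * P * ∫ t in a..b, f t ^ 2 := by
        gcongr
        exact integral_mono_interval (by linarith [hw.2]) (by linarith [hw.1]) ht₀.2
          (Eventually.of_forall fun t => sq_nonneg _) hint

lemma half_le_add_of_sq_le_mul_pow {k : ℕ} (hk : 3 ≤ k) {P Q A m : ℝ} (hQ : 0 ≤ Q) (hA : 0 < A)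
    (hm : 0 ≤ m) (hmP : m ≤ P) (hmA : m ^ 2 ≤ 16 * P * A) (hAQ : A ≤ Q * m ^ (k - 1)) :
    1 / 2 ≤ P + Q := by
  obtain ⟨j, rfl⟩ : ∃ j, k = j + 3 := ⟨k - 3, by omega⟩
  rw [show j + 3 - 1 = j + 2 by omega] at hAQ
  have hmpos : 0 < m := by
    rcases hm.eq_or_lt with h | h
    · rw [← h, zero_pow (by omega), mul_zero] at hAQ; linarith
    · exact h
  have hP : 0 < P := hmpos.trans_le hmP
  have hE : m ≤ P + Q := by linarith
  have hone : 1 ≤ 16 * (P * Q) * m ^ j := by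
    have h : m ^ 2 * 1 ≤ m ^ 2 * (16 * (P * Q) * m ^ j) :=
      calc m ^ 2 * 1 ≤ 16 * P * (Q * m ^ (j + 2)) := by nlinarith
        _ = m ^ 2 * (16 * (P * Q) * m ^ j) := by ring
    exact le_of_mul_le_mul_left h (by positivity)
  have hfour : 1 ≤ 4 * (P + Q) ^ (j + 2) :=
    calc (1 : ℝ) ≤ 16 * (P * Q) * m ^ j := hone
      _ ≤ 4 * (P + Q) ^ 2 * (P + Q) ^ j :=
          mul_le_mul (by nlinarith [sq_nonneg (P - Q)]) (pow_le_pow_left₀ hm hE j)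
            (by positivity) (by positivity)
      _ = 4 * (P + Q) ^ (j + 2) := by ring
  by_contra! h
  have : (P + Q) ^ (j + 2) ≤ (P + Q) ^ 2 :=
    pow_le_pow_of_le_one (by linarith) (by linarith) (by omega)
  nlinarith

lemma half_le_energy_of_trajectory {k : ℕ} (hk : 3 ≤ k) {ε : ℝ} (hε : 0 < ε)
    {u₁ u₂ x₁ : ℝ → ℝ} (hu₁ : IntervalIntegrable u₁ volume 0 1)
    (hu₁sq : IntervalIntegrable (fun t => u₁ t ^ 2) volume 0 1)
    (hu₂ : IntervalIntegrable u₂ volume 0 1)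
    (hu₂sq : IntervalIntegrable (fun t => u₂ t ^ 2) volume 0 1)
    (hx₁ : ContinuousOn x₁ (Icc 0 1)) (hx₁eq : ∀ t ∈ Icc (0 : ℝ) 1, x₁ t = ∫ s in 0..t, u₁ s)
    (hend : ∫ t in (0 : ℝ)..1, (x₁ t ^ 2 + u₂ t * x₁ t ^ k) = -ε) :
    1 / 2 ≤ (∫ t in (0 : ℝ)..1, u₁ t ^ 2) + ∫ t in (0 : ℝ)..1, u₂ t ^ 2 := by
  set P := ∫ t in (0 : ℝ)..1, u₁ t ^ 2
  set Q := ∫ t in (0 : ℝ)..1, u₂ t ^ 2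
  set A := ∫ t in (0 : ℝ)..1, x₁ t ^ 2
  have hP : 0 ≤ P := integral_nonneg zero_le_one fun t _ => sq_nonneg _
  have hQ : 0 ≤ Q := integral_nonneg zero_le_one fun t _ => sq_nonneg _
  have hA0 : 0 ≤ A := integral_nonneg zero_le_one fun t _ => sq_nonneg _
  have hx₁0 : x₁ 0 = 0 := by simpa using hx₁eq 0 ⟨le_rfl, zero_le_one⟩
  obtain ⟨t₀, ht₀, hmax⟩ :=
    isCompact_Icc.exists_isMaxOn (nonempty_Icc.2 zero_le_one) (hx₁.pow 2)
  set m := x₁ t₀ ^ 2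
  have hsub : ∀ {s t : ℝ}, 0 ≤ s → s ≤ t → t ≤ 1 → uIcc s t ⊆ uIcc 0 1 := fun h0 hst h1 => by
    rw [uIcc_of_le hst, uIcc_of_le zero_le_one]; exact Icc_subset_Icc h0 h1
  have hmod : ∀ s ∈ Icc 0 t₀, (x₁ t₀ - x₁ s) ^ 2 ≤ P * (t₀ - s) := by
    intro s hs
    have hdiff : x₁ t₀ - x₁ s = ∫ r in s..t₀, u₁ r := by
      rw [hx₁eq t₀ ht₀, hx₁eq s ⟨hs.1, hs.2.trans ht₀.2⟩, integral_interval_sub_left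
        (hu₁.mono_set (hsub le_rfl ht₀.1 ht₀.2))
        (hu₁.mono_set (hsub le_rfl hs.1 (hs.2.trans ht₀.2)))]
    rw [hdiff, mul_comm]
    calc (∫ r in s..t₀, u₁ r) ^ 2 ≤ (t₀ - s) * ∫ r in s..t₀, u₁ r ^ 2 :=
          sq_integral_le_mul_integral_sq hs.2 (hu₁.mono_set (hsub hs.1 hs.2 ht₀.2))
            (hu₁sq.mono_set (hsub hs.1 hs.2 ht₀.2))
      _ ≤ (t₀ - s) * P := by
          gcongr
          · linarith [hs.2]
          · exact integral_mono_interval hs.1 hs.2 ht₀.2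
              (Eventually.of_forall fun t => sq_nonneg _) hu₁sq
  have hmP : m ≤ P := by
    simpa [hx₁0] using
      (hmod 0 ⟨le_rfl, ht₀.1⟩).trans (mul_le_of_le_one_right hP (by linarith [ht₀.2]))
  have hmA : m ^ 2 ≤ 16 * P * A := by
    rw [← pow_mul]
    exact pow_four_le_mul_integral_sq hx₁ hx₁0 ht₀ hP hmod
  have hx₁sq : IntervalIntegrable (fun t => x₁ t ^ 2) volume 0 1 :=
    (hx₁.pow 2).intervalIntegrable_of_Icc zero_le_one
  have hdrift : IntervalIntegrable (fun t => u₂ t * x₁ t ^ k) volume 0 1 :=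
    hu₂.mul_continuousOn (by rw [uIcc_of_le zero_le_one]; exact hx₁.pow k)
  have hCS : (A + ε) ^ 2 ≤ Q * (m ^ (k - 1) * A) := by
    have hB : ∫ t in (0 : ℝ)..1, u₂ t * x₁ t ^ k = -(A + ε) := by
      rw [integral_add hx₁sq hdrift] at hend; linarith
    calc (A + ε) ^ 2 = (∫ t in (0 : ℝ)..1, u₂ t * x₁ t ^ k) ^ 2 := by rw [hB]; ring
      _ ≤ Q * ∫ t in (0 : ℝ)..1, (x₁ t ^ k) ^ 2 :=
          sq_integral_mul_le_mul_integral_sq zero_le_one hu₂sq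
            (((hx₁.pow k).pow 2).intervalIntegrable_of_Icc zero_le_one) hdrift
      _ ≤ Q * ∫ t in (0 : ℝ)..1, m ^ (k - 1) * x₁ t ^ 2 := by
          gcongr
          refine integral_mono_on zero_le_one
            (((hx₁.pow k).pow 2).intervalIntegrable_of_Icc zero_le_one) (hx₁sq.const_mul _) ?_
          intro t ht
          calc (x₁ t ^ k) ^ 2 = (x₁ t ^ 2) ^ (k - 1) * x₁ t ^ 2 := by
                rw [← pow_succ, ← pow_mul, ← pow_mul]; congr 1; omega
            _ ≤ m ^ (k - 1) * x₁ t ^ 2 := by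
                gcongr
                exact hmax ht
      _ = Q * (m ^ (k - 1) * A) := by rw [intervalIntegral.integral_const_mul]
  have hA : 0 < A := by
    rcases hA0.eq_or_lt with h | h
    · rw [← h, mul_zero, mul_zero] at hCS; nlinarith
    · exact h
  have hAQ : A ≤ Q * m ^ (k - 1) := by
    refine le_of_mul_le_mul_right ?_ hA
    nlinarith
  exact half_le_add_of_sq_le_mul_pow hk hQ hA (sq_nonneg _) hmP hmA hAQ

lemma quarter_le_of_mem_planarCostSet {k : ℕ} (hk : 3 ≤ k) {ε r : ℝ} (hε : 0 < ε)
    (hr : r ∈ planarCostSet k 1 (0, 0) (0, -ε)) : 1 / 4 ≤ r := by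
  obtain ⟨u₁, u₂, x₁, x₂, hu₁m, hu₂m, ⟨C, hC⟩, hx₁, -, hx₁0, hx₂0, -, hx₂1, hx₁eq, hx₂eq, rfl⟩ :=
    hr
  have hbdd : ∀ u : ℝ → ℝ, Measurable u → (∀ᵐ t, t ∈ Icc (0 : ℝ) 1 → |u t| ≤ C) →
      IntervalIntegrable u volume 0 1 ∧ IntervalIntegrable (fun t => u t ^ 2) volume 0 1 :=
    fun u hu hCu => ⟨intervalIntegrable_of_ae_abs_le zero_le_one hu hCu,
      intervalIntegrable_of_ae_abs_le (C := C ^ 2) zero_le_one (hu.pow_const 2) <| by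
        filter_upwards [hCu] with t ht hmem
        rw [abs_pow, ← sq_abs C]
        exact pow_le_pow_left₀ (abs_nonneg _) ((ht hmem).trans (le_abs_self C)) 2⟩
  obtain ⟨hu₁, hu₁sq⟩ := hbdd u₁ hu₁m (hC.mono fun t ht hmem => (ht hmem).1)
  obtain ⟨hu₂, hu₂sq⟩ := hbdd u₂ hu₂m (hC.mono fun t ht hmem => (ht hmem).2)
  have hx₁eq' : ∀ t ∈ Icc (0 : ℝ) 1, x₁ t = ∫ s in 0..t, u₁ s := fun t ht => by
    simpa [hx₁0] using hx₁eq t ht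
  have hend : ∫ t in (0 : ℝ)..1, (x₁ t ^ 2 + u₂ t * x₁ t ^ k) = -ε := by
    simpa [hx₂0, hx₂1] using (hx₂eq 1 ⟨zero_le_one, le_rfl⟩).symm
  have := half_le_energy_of_trajectory hk hε hu₁ hu₁sq hu₂ hu₂sq hx₁ hx₁eq' hend
  rw [integral_add hu₁sq hu₂sq]
  linarith

lemma nonneg_of_mem_planarCostSet {k : ℕ} {T r : ℝ} {a b : ℝ × ℝ} (hT : 0 ≤ T)
    (hr : r ∈ planarCostSet k T a b) : 0 ≤ r := by
  obtain ⟨u₁, u₂, -, -, -, -, -, -, -, -, -, -, -, -, -, rfl⟩ := hr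
  have := integral_nonneg (μ := volume) hT fun t _ =>
    add_nonneg (sq_nonneg (u₁ t)) (sq_nonneg (u₂ t))
  positivity

lemma zero_mem_planarCostSet (k : ℕ) (T : ℝ) : (0 : ℝ) ∈ planarCostSet k T (0, 0) (0, 0) := by
  refine ⟨fun _ => 0, fun _ => 0, fun _ => 0, fun _ => 0, measurable_const, measurable_const,
    ⟨0, Eventually.of_forall fun t _ => by norm_num⟩,
    continuousOn_const, continuousOn_const, rfl, rfl, rfl, rfl, ?_, ?_, ?_⟩ <;> simp

lemma planarCost_zero_zero (k : ℕ) {T : ℝ} (hT : 0 ≤ T) : planarCost k T (0, 0) (0, 0) = 0 :=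
  le_antisymm (csInf_le ⟨0, fun _ => nonneg_of_mem_planarCostSet hT⟩ (zero_mem_planarCostSet k T))
    (le_csInf ⟨0, zero_mem_planarCostSet k T⟩ fun _ => nonneg_of_mem_planarCostSet hT)

lemma planarCostSet_nonempty (k : ℕ) (y : ℝ) : (planarCostSet k 1 (0, 0) (0, y)).Nonempty := by
  -- `x₁ = t - t²` with a constant `u₂ = c` chosen so that `x₂` ends at `y`
  have hbump : Continuous fun s : ℝ => (s - s ^ 2) ^ k := by fun_prop
  have hI : 0 < ∫ s in (0 : ℝ)..1, (s - s ^ 2) ^ k := by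
    refine intervalIntegral_pos_of_pos_on (hbump.intervalIntegrable 0 1) (fun s hs => ?_) one_pos
    have : 0 < s - s ^ 2 := by nlinarith [hs.1, hs.2]
    positivity
  set c := (y - ∫ s in (0 : ℝ)..1, (s - s ^ 2) ^ 2) / ∫ s in (0 : ℝ)..1, (s - s ^ 2) ^ k
  have hdrift : Continuous fun s : ℝ => (s - s ^ 2) ^ 2 + c * (s - s ^ 2) ^ k := by fun_prop
  refine ⟨_, fun t => 1 - 2 * t, fun _ => c, fun t => t - t ^ 2,
    fun t => ∫ s in (0 : ℝ)..t, ((s - s ^ 2) ^ 2 + c * (s - s ^ 2) ^ k),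
    by fun_prop, measurable_const,
    ⟨1 + |c|, Eventually.of_forall fun t ht => ⟨?_, by linarith [abs_nonneg (1 - 2 * t)]⟩⟩,
    by fun_prop, (continuous_primitive (fun a b => hdrift.intervalIntegrable a b) 0).continuousOn,
    by norm_num, by simp, by norm_num, ?_, fun t _ => ?_, fun t _ => by simp, rfl⟩
  · have : |1 - 2 * t| ≤ 1 := abs_le.2 ⟨by linarith [ht.2], by linarith [ht.1]⟩
    linarith [abs_nonneg c]
  · show ∫ s in (0 : ℝ)..1, ((s - s ^ 2) ^ 2 + c * (s - s ^ 2) ^ k) = y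
    rw [integral_add (Continuous.intervalIntegrable (by fun_prop) 0 1)
      ((hbump.intervalIntegrable 0 1).const_mul c), intervalIntegral.integral_const_mul,
      div_mul_cancel₀ _ hI.ne']
    ring
  · rw [integral_sub intervalIntegrable_const (Continuous.intervalIntegrable (by fun_prop) 0 t),
      intervalIntegral.integral_const_mul, integral_id, intervalIntegral.integral_const,
      smul_eq_mul]
    ring

lemma quarter_le_planarCost {k : ℕ} (hk : 3 ≤ k) {ε : ℝ} (hε : 0 < ε) :
    1 / 4 ≤ planarCost k 1 (0, 0) (0, -ε) :=
  le_csInf (planarCostSet_nonempty k (-ε)) fun _ => quarter_le_of_mem_planarCostSet hk hε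

/-- **Discontinuity of the cost** (Proposition in Section 2): for every integer `k ≥ 3`,
the cost function `(x,y) ↦ c₁(x,y)` of the planar control system is not continuous on
`ℝ² × ℝ²`. -/
theorem planarCost_not_continuous (k : ℕ) (hk : 3 ≤ k) :
    ¬ Continuous (fun p : (ℝ × ℝ) × (ℝ × ℝ) => planarCost k 1 p.1 p.2) := by
  intro hcont
  have hpath : Tendsto (fun ε : ℝ => (((0 : ℝ), (0 : ℝ)), ((0 : ℝ), -ε))) (𝓝[>] 0)
      (𝓝 ((0, 0), (0, 0))) :=
    ((by fun_prop : Continuous fun ε : ℝ => (((0 : ℝ), (0 : ℝ)), ((0 : ℝ), -ε))).tendsto' 0 _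
      (by simp)).mono_left nhdsWithin_le_nhds
  have hlim := (hcont.tendsto _).comp hpath
  have : 1 / 4 ≤ planarCost k 1 (0, 0) (0, 0) :=
    ge_of_tendsto hlim (eventually_nhdsWithin_of_forall fun ε hε => quarter_le_planarCost hk hε)
  rw [planarCost_zero_zero k zero_le_one] at this
  norm_num at this
end
end

section
/- Let f : M → ℝ be bounded, let a > 0 and h ∈ ℝ be such that the family {y ↦ S_t f(y) − h t : t ≥ a} is uniformly bounded and uniformly equicontinuous on M, and define f̄(x) = inf_{t ≥ a} [S_t f(x) − h t]. Then the functions y ↦ S_t f̄(y) − h t converge uniformly on M as t → ∞ to a continuous function f̃ : M → ℝ, and this limit satisfies S_t f̃ = f̃ + h t (as functions on M) for all t > 0. -/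
/-!
Write `u t = S_t f - h t`. Because `S_t` commutes with infima of uniformly bounded below
families, the dynamic programming identity gives `S_t f̄ - h t = inf_{r ≥ a + t} u r`: a
nondecreasing family in `t` sharing the modulus of continuity of `{u r : r ≥ a}`. It increases
to the continuous function `f̃ = liminf u`, uniformly by Dini's theorem on the compact `M`.
Since `S_t` is `1`-Lipschitz for the sup norm,
`S_t f̃ = lim_s S_t (inf_{r ≥ s} u r) = lim_s (inf_{r ≥ s + t} u r) + h t = f̃ + h t`.
-/

open Set Filter Topology Function

theorem ciInf_comm {α β γ : Type*} [ConditionallyCompleteLattice α] {f : β → γ → α}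
    (hf : BddBelow (range (uncurry f))) : ⨅ b, ⨅ c, f b c = ⨅ c, ⨅ b, f b c := by
  have hf' : BddBelow (range fun p : γ × β => f p.2 p.1) := by
    rwa [← (Equiv.prodComm γ β).surjective.range_comp] at hf
  calc ⨅ b, ⨅ c, f b c = ⨅ p : β × γ, uncurry f p := (ciInf_prod hf).symm
    _ = ⨅ p : γ × β, f p.2 p.1 := ((Equiv.prodComm γ β).iInf_comp).symm
    _ = ⨅ c, ⨅ b, f b c := ciInf_prod hf'

theorem ciInf_le_ciInf_add {ι : Type*} [Nonempty ι] {f g : ι → ℝ} {ε : ℝ}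
    (hf : BddBelow (range f)) (hfg : ∀ i, f i ≤ g i + ε) : ⨅ i, f i ≤ (⨅ i, g i) + ε := by
  rw [← sub_le_iff_le_add]
  exact le_ciInf fun i => sub_le_iff_le_add.2 ((ciInf_le hf i).trans (hfg i))

theorem dist_ciInf_ciInf_le {ι : Type*} [Nonempty ι] {f g : ι → ℝ} {ε : ℝ}
    (hf : BddBelow (range f)) (hg : BddBelow (range g)) (hfg : ∀ i, dist (f i) (g i) ≤ ε) :
    dist (⨅ i, f i) (⨅ i, g i) ≤ ε := by
  simp only [Real.dist_eq, abs_sub_le_iff, sub_le_iff_le_add'] at hfg ⊢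
  exact ⟨ciInf_le_ciInf_add hf fun i => (hfg i).1, ciInf_le_ciInf_add hg fun i => (hfg i).2⟩

theorem iInf_Ici_comp_add {α : Type*} [InfSet α] (φ : ℝ → α) (s t : ℝ) :
    ⨅ r : Ici s, φ (r + t) = ⨅ r : Ici (s + t), φ r :=
  (Equiv.subtypeEquiv (Equiv.addRight t) fun _ => (add_le_add_iff_right t).symm).iInf_comp
    (g := fun r : Ici (s + t) => φ r)

theorem Equicontinuous.ciInf_subfamily {ι κ X : Type*} [TopologicalSpace X] {F : ι → X → ℝ}
    {S : Set ι} {B : ℝ} (hF : Equicontinuous fun i : S => F i) (hB : ∀ i ∈ S, ∀ x, B ≤ F i x)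
    {T : κ → Set ι} (hTS : ∀ k, T k ⊆ S) (hT : ∀ k, (T k).Nonempty) :
    Equicontinuous fun k x => ⨅ i : T k, F i x := by
  intro x₀
  have hbdd : ∀ k x, BddBelow (range fun i : T k => F i x) :=
    fun k x => ⟨B, forall_mem_range.2 fun i => hB i (hTS k i.2) x⟩
  have hFx₀ := Metric.equicontinuousAt_iff_right.1 (hF x₀)
  refine Metric.equicontinuousAt_iff_right.2 fun ε hε => ?_
  filter_upwards [hFx₀ (ε / 2) (half_pos hε)] with x hx k
  have : Nonempty (T k) := (hT k).to_subtype
  exact (dist_ciInf_ciInf_le (hbdd k x₀) (hbdd k x)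
    fun i => (hx ⟨i, hTS k i.2⟩).le).trans_lt (half_lt_self hε)

section UniformConvergence

variable {ι κ α β : Type*} [UniformSpace β] {F G : ι → α → β} {f : α → β} {p : Filter ι}

theorem TendstoUniformly.comp_tendsto (h : TendstoUniformly F f p) {φ : κ → ι} {q : Filter κ}
    (hφ : Tendsto φ q p) : TendstoUniformly (fun k => F (φ k)) f q :=
  tendstoUniformly_iff_tendsto.2 <|
    (tendstoUniformly_iff_tendsto.1 h).comp (hφ.prodMap tendsto_id)

theorem TendstoUniformly.congr (h : TendstoUniformly F f p) (hFG : F =ᶠ[p] G) :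
    TendstoUniformly G f p :=
  tendstoUniformly_iff_tendstoUniformlyOnFilter.2 <|
    (tendstoUniformly_iff_tendstoUniformlyOnFilter.1 h).congr <|
      (hFG.prod_inl ⊤).mono fun n hn => congrFun hn n.2

end UniformConvergence

/-- A junk value unless `(u · x)` is bounded below on `[s, ∞)`. -/
noncomputable def tailInf {X : Type*} (u : ℝ → X → ℝ) (s : ℝ) (x : X) : ℝ :=
  ⨅ t : Ici s, u t x

section TailInf

variable {X : Type*} {u : ℝ → X → ℝ} {a : ℝ}

theorem tailInf_le_tailInf {B s s' : ℝ} (hB : ∀ t ≥ s, ∀ x, B ≤ u t x) (hss' : s ≤ s') (x : X) :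
    tailInf u s x ≤ tailInf u s' x :=
  le_ciInf fun t : Ici s' => ciInf_le (f := fun r : Ici s => u r x)
    ⟨B, forall_mem_range.2 fun r => hB r r.2 x⟩ ⟨t, hss'.trans t.2⟩

theorem abs_tailInf_le {C s : ℝ} (hC : ∀ t ≥ s, ∀ x, |u t x| ≤ C) (x : X) :
    |tailInf u s x| ≤ C := by
  have hlow : ∀ t : Ici s, -C ≤ u t x := fun t => (abs_le.1 (hC t t.2 x)).1
  rw [abs_le]
  exact ⟨le_ciInf hlow, (ciInf_le ⟨-C, forall_mem_range.2 hlow⟩ ⟨s, self_mem_Ici⟩).trans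
    (abs_le.1 (hC s le_rfl x)).2⟩

theorem exists_tendstoUniformly_tailInf [TopologicalSpace X] [CompactSpace X] {C : ℝ}
    (hC : ∀ t ≥ a, ∀ x, |u t x| ≤ C) (hequi : Equicontinuous fun t : Ici a => u t) :
    ∃ g : X → ℝ, Continuous g ∧ TendstoUniformly (tailInf u) g atTop := by
  -- `tailInf u` is only monotone on `[a, ∞)`, hence the reparametrization by `max a s`.
  set F : ℝ → X → ℝ := fun s => tailInf u (max a s)
  have hlow : ∀ t ≥ a, ∀ x, -C ≤ u t x := fun t ht x => (abs_le.1 (hC t ht x)).1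
  have hF_equi : Equicontinuous F :=
    hequi.ciInf_subfamily hlow (T := fun s => Ici (max a s))
      (fun _ => Ici_subset_Ici.2 (le_max_left _ _)) fun _ => nonempty_Ici
  have hF_mono : Monotone F := fun s s' hss' =>
    tailInf_le_tailInf (fun t ht => hlow t (le_of_max_le_left ht)) (max_le_max le_rfl hss')
  have hF_bdd : ∀ x, BddAbove (range fun s => F s x) := fun x =>
    ⟨C, forall_mem_range.2 fun s =>
      (abs_le.1 (abs_tailInf_le (fun t ht => hC t (le_of_max_le_left ht)) x)).2⟩
  have hF_lim : Tendsto F atTop (𝓝 fun x => ⨆ s, F s x) :=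
    tendsto_pi_nhds.2 fun x => tendsto_atTop_ciSup (fun _ _ h => hF_mono h x) (hF_bdd x)
  have hcont := hF_lim.continuous_of_equicontinuous hF_equi
  refine ⟨_, hcont, ?_⟩
  refine (hF_mono.tendstoUniformly_of_forall_tendsto hF_equi.continuous hcont
    (tendsto_pi_nhds.1 hF_lim)).congr ?_
  filter_upwards [eventually_ge_atTop a] with s hs
  simp only [F, max_eq_right hs]

end TailInf

noncomputable def laxOleinik {M : Type*} (c : ℝ → M → M → ℝ) (t : ℝ) (g : M → ℝ) (y : M) : ℝ :=
  ⨅ x, c t x y + g x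

section LaxOleinik

variable {M : Type*} {c : ℝ → M → M → ℝ} {s t : ℝ} {g g' : M → ℝ}

theorem bddBelow_range_uncurry_of_continuousOn [TopologicalSpace M] [CompactSpace M]
    (hc : ContinuousOn (fun p : ℝ × M × M => c p.1 p.2.1 p.2.2) {p | 0 < p.1}) (ht : 0 < t) :
    BddBelow (range (uncurry (c t))) :=
  (isCompact_range <|
    hc.comp_continuous (continuous_const.prodMk continuous_id) fun _ => ht).bddBelow

theorem bddBelow_range_cost_add (hct : BddBelow (range (uncurry (c t))))
    (hg : BddBelow (range g)) (y : M) : BddBelow (range fun x => c t x y + g x) := by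
  obtain ⟨K, hK⟩ := hct
  obtain ⟨B, hB⟩ := hg
  exact ⟨K + B, forall_mem_range.2 fun x =>
    add_le_add (hK (mem_range_self (x, y))) (hB (mem_range_self x))⟩

theorem bddBelow_range_laxOleinik [Nonempty M] (hct : BddBelow (range (uncurry (c t))))
    (hg : BddBelow (range g)) : BddBelow (range (laxOleinik c t g)) := by
  obtain ⟨K, hK⟩ := hct
  obtain ⟨B, hB⟩ := hg
  exact ⟨K + B, forall_mem_range.2 fun y => le_ciInf fun x =>
    add_le_add (hK (mem_range_self (x, y))) (hB (mem_range_self x))⟩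

theorem laxOleinik_add_const [Nonempty M] (hct : BddBelow (range (uncurry (c t))))
    (hg : BddBelow (range g)) (k : ℝ) (y : M) :
    laxOleinik c t (fun x => g x + k) y = laxOleinik c t g y + k := by
  rw [laxOleinik, laxOleinik, ← OrderIso.addRight_apply k,
    OrderIso.map_ciInf _ (bddBelow_range_cost_add hct hg y)]
  simp only [OrderIso.addRight_apply, add_assoc]

theorem dist_laxOleinik_le [Nonempty M] (hct : BddBelow (range (uncurry (c t))))
    (hg : BddBelow (range g)) (hg' : BddBelow (range g')) {ε : ℝ}
    (hgg' : ∀ x, dist (g x) (g' x) ≤ ε) (y : M) :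
    dist (laxOleinik c t g y) (laxOleinik c t g' y) ≤ ε :=
  dist_ciInf_ciInf_le (bddBelow_range_cost_add hct hg y) (bddBelow_range_cost_add hct hg' y)
    fun x => (dist_add_left _ _ _).trans_le (hgg' x)

theorem laxOleinik_ciInf {ι : Type*} [Nonempty ι] {G : ι → M → ℝ}
    (hct : BddBelow (range (uncurry (c t)))) (hG : BddBelow (range (uncurry G))) (y : M) :
    laxOleinik c t (fun x => ⨅ i, G i x) y = ⨅ i, laxOleinik c t (G i) y := by
  obtain ⟨K, hK⟩ := hct
  obtain ⟨B, hB⟩ := hG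
  have hGx : ∀ x, BddBelow (range fun i => G i x) :=
    fun x => ⟨B, forall_mem_range.2 fun i => hB (mem_range_self (i, x))⟩
  calc laxOleinik c t (fun x => ⨅ i, G i x) y = ⨅ x, ⨅ i, c t x y + G i x := by
        refine iInf_congr fun x => ?_
        rw [← OrderIso.addLeft_apply (c t x y), OrderIso.map_ciInf _ (hGx x)]
        rfl
    _ = ⨅ i, laxOleinik c t (G i) y := ciInf_comm ⟨K + B, forall_mem_range.2 fun p =>
        add_le_add (hK (mem_range_self (p.1, y))) (hB (mem_range_self (p.2, p.1)))⟩

theorem laxOleinik_add [Nonempty M] (hcs : BddBelow (range (uncurry (c s))))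
    (hct : BddBelow (range (uncurry (c t))))
    (hst : ∀ x y, c (s + t) x y = ⨅ z, c s x z + c t z y) (hg : BddBelow (range g)) (y : M) :
    laxOleinik c (s + t) g y = laxOleinik c t (laxOleinik c s g) y := by
  obtain ⟨Ks, hKs⟩ := hcs
  obtain ⟨Kt, hKt⟩ := id hct
  obtain ⟨B, hB⟩ := hg
  have hcs_add : BddBelow (range (uncurry fun x z => c s x z + g x)) :=
    ⟨Ks + B, forall_mem_range.2 fun p =>
      add_le_add (hKs (mem_range_self p)) (hB (mem_range_self p.1))⟩
  rw [show laxOleinik c s g = fun z => ⨅ x, c s x z + g x from rfl,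
    laxOleinik_ciInf hct hcs_add]
  refine iInf_congr fun x => ?_
  have hpath : BddBelow (range fun z => c s x z + c t z y) :=
    ⟨Ks + Kt, forall_mem_range.2 fun z =>
      add_le_add (hKs (mem_range_self (x, z))) (hKt (mem_range_self (z, y)))⟩
  rw [hst, ← OrderIso.addRight_apply (g x), OrderIso.map_ciInf _ hpath]
  exact iInf_congr fun z => by simp only [OrderIso.addRight_apply]; ring

theorem tendstoUniformly_laxOleinik [Nonempty M] {ι : Type*} {p : Filter ι} {G : ι → M → ℝ}
    (hct : BddBelow (range (uncurry (c t)))) (hG : ∀ᶠ i in p, BddBelow (range (G i)))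
    (hg : BddBelow (range g)) (h : TendstoUniformly G g p) :
    TendstoUniformly (fun i => laxOleinik c t (G i)) (laxOleinik c t g) p := by
  rw [Metric.tendstoUniformly_iff] at h ⊢
  intro ε hε
  filter_upwards [h (ε / 2) (half_pos hε), hG] with i hi hGi y
  exact (dist_laxOleinik_le hct hg hGi (fun x => (hi x).le) y).trans_lt (half_lt_self hε)

end LaxOleinik

noncomputable def normalizedOrbit {M : Type*} (c : ℝ → M → M → ℝ) (f : M → ℝ) (h t : ℝ)
    (y : M) : ℝ :=
  laxOleinik c t f y - h * t

section NormalizedOrbit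

variable {M : Type*} [Nonempty M] {c : ℝ → M → M → ℝ} {f : M → ℝ} {h : ℝ}

theorem laxOleinik_normalizedOrbit {r t : ℝ} (hcr : BddBelow (range (uncurry (c r))))
    (hct : BddBelow (range (uncurry (c t))))
    (hrt : ∀ x y, c (r + t) x y = ⨅ z, c r x z + c t z y) (hf : BddBelow (range f)) (y : M) :
    laxOleinik c t (normalizedOrbit c f h r) y = normalizedOrbit c f h (r + t) y + h * t := by
  change laxOleinik c t (fun x => laxOleinik c r f x + -(h * r)) y = _
  rw [laxOleinik_add_const hct (bddBelow_range_laxOleinik hcr hf), normalizedOrbit,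
    laxOleinik_add hcr hct hrt hf]
  ring

theorem laxOleinik_tailInf_normalizedOrbit (hc : ∀ r > 0, BddBelow (range (uncurry (c r))))
    (hdpp : ∀ r t : ℝ, 0 < r → 0 < t → ∀ x y, c (r + t) x y = ⨅ z, c r x z + c t z y)
    (hf : BddBelow (range f)) {s t B : ℝ} (hs : 0 < s) (ht : 0 < t)
    (hB : ∀ r ≥ s, ∀ x, B ≤ normalizedOrbit c f h r x) (y : M) :
    laxOleinik c t (tailInf (normalizedOrbit c f h) s) y =
      tailInf (normalizedOrbit c f h) (s + t) y + h * t := by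
  have : Nonempty (Ici s) := nonempty_Ici.to_subtype
  have hshift : BddBelow (range fun r : Ici s => normalizedOrbit c f h (r + t) y) :=
    ⟨B, forall_mem_range.2 fun r => hB _ (le_add_of_le_of_nonneg r.2 ht.le) y⟩
  calc laxOleinik c t (tailInf (normalizedOrbit c f h) s) y
      = ⨅ r : Ici s, laxOleinik c t (normalizedOrbit c f h r) y :=
        laxOleinik_ciInf (G := fun r : Ici s => normalizedOrbit c f h r) (hc t ht)
          ⟨B, forall_mem_range.2 fun p => hB p.1 p.1.2 p.2⟩ y
    _ = ⨅ r : Ici s, (normalizedOrbit c f h (r + t) y + h * t) := by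
        refine iInf_congr fun r => ?_
        have hr : 0 < (r : ℝ) := hs.trans_le r.2
        exact laxOleinik_normalizedOrbit (hc r hr) (hc t ht) (hdpp r t hr ht) hf y
    _ = (⨅ r : Ici s, normalizedOrbit c f h (r + t) y) + h * t :=
        ((OrderIso.addRight (h * t)).map_ciInf hshift).symm
    _ = tailInf (normalizedOrbit c f h) (s + t) y + h * t := by
        rw [iInf_Ici_comp_add (normalizedOrbit c f h · y)]
        rfl

end NormalizedOrbit

/-- **Convergence of the Lax–Oleinik semigroup** (Theorem `wKAMS`): on a compact metric
space `M` with continuous cost `c` satisfying the dynamic programming identity, if `f`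
is bounded and the family `{y ↦ S_t f(y) − h t : t ≥ a}` is uniformly bounded and
uniformly equicontinuous, then with `f̄(x) = inf_{t ≥ a} (S_t f(x) − h t)`, the functions
`y ↦ S_t f̄(y) − h t` converge uniformly as `t → ∞` to a continuous function `f̃`
satisfying `S_t f̃ = f̃ + h t` for all `t > 0`. Here `S_t f (y) = inf_x (c_t(x,y) + f(x))`. -/
theorem laxOleinik_uniform_convergence
    (M : Type*) [MetricSpace M] [CompactSpace M] [Nonempty M]
    (c : ℝ → M → M → ℝ)
    (hc : ContinuousOn (fun p : ℝ × M × M => c p.1 p.2.1 p.2.2) {p | 0 < p.1})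
    (hdpp : ∀ s t : ℝ, 0 < s → 0 < t → ∀ x y : M,
      c (s + t) x y = ⨅ z : M, (c s x z + c t z y))
    (f : M → ℝ) (hf : ∃ C, ∀ x, |f x| ≤ C)
    (a : ℝ) (ha : 0 < a) (h : ℝ)
    (hbd : ∃ C : ℝ, ∀ t : ℝ, a ≤ t → ∀ y : M,
        |(⨅ x : M, (c t x y + f x)) - h * t| ≤ C)
    (heq : ∀ ε > 0, ∃ δ > 0, ∀ t : ℝ, a ≤ t → ∀ y₁ y₂ : M, dist y₁ y₂ < δ →
        |(⨅ x : M, (c t x y₁ + f x)) - (⨅ x : M, (c t x y₂ + f x))| < ε)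
    (fbar : M → ℝ)
    (hfbar : ∀ x : M, fbar x = ⨅ t : Set.Ici a, ((⨅ z : M, (c t.1 z x + f z)) - h * t.1)) :
    ∃ ftil : M → ℝ, Continuous ftil ∧
      TendstoUniformly (fun (t : ℝ) (y : M) => (⨅ x : M, (c t x y + fbar x)) - h * t)
        ftil Filter.atTop ∧
      ∀ t : ℝ, 0 < t → ∀ y : M, (⨅ x : M, (c t x y + ftil x)) = ftil y + h * t := by
  obtain ⟨C, hC⟩ := hbd
  set u := normalizedOrbit c f h
  have hu_bdd : ∀ t ≥ a, ∀ y, |u t y| ≤ C := hC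
  have hcost : ∀ t > 0, BddBelow (range (uncurry (c t))) := fun _ ht =>
    bddBelow_range_uncurry_of_continuousOn hc ht
  have hf_bdd : BddBelow (range f) :=
    let ⟨C', hC'⟩ := hf
    ⟨-C', forall_mem_range.2 fun x => neg_le_of_abs_le (hC' x)⟩
  have hu_equi : Equicontinuous fun t : Ici a => u t :=
    (Metric.uniformEquicontinuous_iff.2 fun ε hε =>
      let ⟨δ, hδ, H⟩ := heq ε hε
      ⟨δ, hδ, fun y₁ y₂ hy t => by
        change |(laxOleinik c t f y₁ - h * t) - (laxOleinik c t f y₂ - h * t)| < ε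
        rw [sub_sub_sub_cancel_right]
        exact H t t.2 y₁ y₂ hy⟩).equicontinuous
  have htail_bdd : ∀ s ≥ a, BddBelow (range (tailInf u s)) := fun s hs =>
    ⟨-C, forall_mem_range.2 fun y =>
      neg_le_of_abs_le (abs_tailInf_le (fun r hr => hu_bdd r (hs.trans hr)) y)⟩
  have hflow : ∀ s ≥ a, ∀ t > 0, ∀ y,
      laxOleinik c t (tailInf u s) y = tailInf u (s + t) y + h * t := fun s hs t ht =>
    laxOleinik_tailInf_normalizedOrbit hcost hdpp hf_bdd (ha.trans_le hs) ht
      fun r hr y => neg_le_of_abs_le (hu_bdd r (hs.trans hr) y)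
  obtain ⟨ftil, hcont, hlim⟩ := exists_tendstoUniformly_tailInf hu_bdd hu_equi
  refine ⟨ftil, hcont, ?_, fun t ht y => ?_⟩
  · refine (hlim.comp_tendsto (tendsto_atTop_add_const_left _ a tendsto_id)).congr ?_
    filter_upwards [eventually_gt_atTop 0] with t ht
    funext y
    change tailInf u (a + t) y = laxOleinik c t fbar y - h * t
    rw [show fbar = tailInf u a from funext hfbar, hflow a le_rfl t ht, add_sub_cancel_right]
  · have hS : Tendsto (fun s => laxOleinik c t (tailInf u s) y) atTop
        (𝓝 (laxOleinik c t ftil y)) :=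
      (tendstoUniformly_laxOleinik (hcost t ht) ((eventually_ge_atTop a).mono htail_bdd)
        (isCompact_range hcont).bddBelow hlim).tendsto_at y
    have hshift : Tendsto (fun s => tailInf u (s + t) y + h * t) atTop (𝓝 (ftil y + h * t)) :=
      ((hlim.tendsto_at y).comp (tendsto_atTop_add_const_right _ t tendsto_id)).add_const _
    exact tendsto_nhds_unique
      (hS.congr' ((eventually_ge_atTop a).mono fun s hs => hflow s hs t ht y)) hshift
end

section
/- Let h ∈ ℝ and K > 0 be such that |c_t(x,y) − h t| ≤ K for all t ≥ 1 and all x, y ∈ M. Then for every T > 0, the quantity α_T := inf_μ (1/T) C_T(μ,μ), where the infimum is taken over all Borel probability measures μ on M, equals h. -/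
open MeasureTheory

/-- A coupling of two Borel probability measures: a probability measure on `M × M`
whose first marginal is `μ` and second marginal is `ν`. -/
def IsCoupling {M : Type*} [MeasurableSpace M]
    (P : Measure (M × M)) (μ ν : Measure M) : Prop :=
  P.map Prod.fst = μ ∧ P.map Prod.snd = ν

/-- The Monge–Kantorovich optimal transportation cost `C(μ,ν)`:
the infimum of `∫ c dΠ` over all couplings `Π` of `μ` and `ν`. -/
noncomputable def transportCost {M : Type*} [MeasurableSpace M]
    (c : M → M → ℝ) (μ ν : Measure M) : ℝ :=
  sInf {r : ℝ | ∃ P : Measure (M × M), IsProbabilityMeasure P ∧ IsCoupling P μ ν ∧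
    r = ∫ p, c p.1 p.2 ∂P}

/-!
Lower bound, by duality: `u y = inf_{t ≥ 1, x} (c_t(x,y) - h t)` is bounded, measurable
(upper semicontinuous), and by the dynamic programming inequality satisfies
`u z ≤ u y + c_T(y,z) - h T`. Integrating this against any coupling of `μ` with itself,
whose two marginals agree, gives `∫ c_T ≥ h T`.

Upper bound: on a compact space the infimum in the dynamic programming identity is attained,
so `c_{(n+1)T}(x,x)` is the `c_T`-length of a closed chain `x = z₀, …, z_{n+1} = x`. The
uniform measure on the chain is coupled to itself by the shift `zᵢ ↦ zᵢ₊₁`, at cost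
`c_{(n+1)T}(x,x) / (n+1) ≤ h T + K / (n+1)`.
-/

open Set Filter Topology Finset
open scoped ENNReal

theorem Finset.sum_range_succ_eq_sum_range_of_eq {β : Type*} [AddCommMonoid β] {f : ℕ → β}
    {n : ℕ} (h : f n = f 0) : ∑ i ∈ range n, f (i + 1) = ∑ i ∈ range n, f i := by
  cases n with
  | zero => simp
  | succ n => rw [sum_range_succ, h, ← sum_range_succ']

section Coupling

variable {X : Type*} [MeasurableSpace X]

theorem isCoupling_prod (μ ν : Measure X) [IsProbabilityMeasure μ] [IsProbabilityMeasure ν] :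
    IsCoupling (μ.prod ν) μ ν :=
  ⟨Measure.fst_prod, Measure.snd_prod⟩

theorem le_transportCost {c : X → X → ℝ} {μ ν : Measure X} [IsProbabilityMeasure μ]
    [IsProbabilityMeasure ν] {a : ℝ}
    (h : ∀ P, IsProbabilityMeasure P → IsCoupling P μ ν → a ≤ ∫ p, c p.1 p.2 ∂P) :
    a ≤ transportCost c μ ν :=
  le_csInf ⟨_, μ.prod ν, inferInstance, isCoupling_prod μ ν, rfl⟩ <| by
    rintro _ ⟨P, hP, hPc, rfl⟩
    exact h P hP hPc

theorem transportCost_le {c : X → X → ℝ} {μ ν : Measure X} {a : ℝ}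
    (h : ∀ P, IsProbabilityMeasure P → IsCoupling P μ ν → a ≤ ∫ p, c p.1 p.2 ∂P)
    {P : Measure (X × X)} [IsProbabilityMeasure P] (hP : IsCoupling P μ ν) :
    transportCost c μ ν ≤ ∫ p, c p.1 p.2 ∂P :=
  csInf_le ⟨a, by rintro _ ⟨P, hP, hPc, rfl⟩; exact h P hP hPc⟩ ⟨P, inferInstance, hP, rfl⟩

/-- Kantorovich duality, easy direction: `u` integrates to the same value against both
marginals, so it drops out of `∫ (c x y - a + u x - u y) dP ≥ 0`. -/
theorem le_integral_of_forall_le_add {P : Measure (X × X)} [IsProbabilityMeasure P]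
    {μ : Measure X} (hP : IsCoupling P μ μ) {c : X → X → ℝ}
    (hc : Integrable (fun p => c p.1 p.2) P) {u : X → ℝ} (hu : Integrable u μ) {a : ℝ}
    (hsub : ∀ x y, u y ≤ u x + c x y - a) : a ≤ ∫ p, c p.1 p.2 ∂P := by
  have hu₁ : Integrable (fun p : X × X => u p.1) P := (hP.1 ▸ hu).comp_measurable measurable_fst
  have hu₂ : Integrable (fun p : X × X => u p.2) P := (hP.2 ▸ hu).comp_measurable measurable_snd
  have hmarg : ∫ p, u p.2 ∂P = ∫ p, u p.1 ∂P := by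
    rw [← integral_map measurable_snd.aemeasurable (hP.2 ▸ hu.aestronglyMeasurable), hP.2,
      ← hP.1, integral_map measurable_fst.aemeasurable (hP.1 ▸ hu.aestronglyMeasurable)]
  have hdiff : Integrable (fun p : X × X => u p.2 - u p.1) P := hu₂.sub hu₁
  calc a = ∫ p, (u p.2 - u p.1 + a) ∂P := by
        rw [integral_add hdiff (integrable_const a), integral_sub hu₂ hu₁, hmarg]
        simp
    _ ≤ ∫ p, c p.1 p.2 ∂P :=
        integral_mono (hdiff.add (integrable_const a)) hc fun p => by linarith [hsub p.1 p.2]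

noncomputable def chainMeasure (n : ℕ) (z : ℕ → X) : Measure X :=
  (n : ℝ≥0∞)⁻¹ • ∑ i ∈ range n, Measure.dirac (z i)

instance (n : ℕ) [NeZero n] (z : ℕ → X) : IsProbabilityMeasure (chainMeasure n z) := by
  constructor
  simp only [chainMeasure, Measure.smul_apply, Measure.finsetSum_apply, measure_univ, sum_const,
    card_range, nsmul_eq_mul, mul_one, smul_eq_mul]
  exact ENNReal.inv_mul_cancel (by simp [NeZero.ne n]) (by simp)

theorem map_chainMeasure {Y : Type*} [MeasurableSpace Y] {f : X → Y} (hf : Measurable f)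
    (n : ℕ) (z : ℕ → X) : (chainMeasure n z).map f = chainMeasure n (f ∘ z) := by
  simp only [chainMeasure, Measure.map_smul, Measure.map_finset_sum hf.aemeasurable,
    Measure.map_dirac' hf, Function.comp_apply]

theorem integral_chainMeasure [MeasurableSingletonClass X] (n : ℕ) (z : ℕ → X) (f : X → ℝ) :
    ∫ x, f x ∂chainMeasure n z = (n : ℝ)⁻¹ * ∑ i ∈ range n, f (z i) := by
  rw [chainMeasure, integral_smul_measure,
    integral_finsetSum_measure fun i _ => integrable_dirac enorm_lt_top]
  simp [integral_dirac]

theorem isCoupling_chainMeasure_succ {n : ℕ} {z : ℕ → X} (hz : z n = z 0) :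
    IsCoupling (chainMeasure n fun i => (z i, z (i + 1))) (chainMeasure n z)
      (chainMeasure n z) := by
  refine ⟨map_chainMeasure measurable_fst n _, ?_⟩
  rw [map_chainMeasure measurable_snd]
  simp only [chainMeasure, Function.comp_def]
  rw [sum_range_succ_eq_sum_range_of_eq (f := fun i => Measure.dirac (z i)) (by simp [hz])]

end Coupling

section Cost

variable {M : Type*} [TopologicalSpace M] {c : ℝ → M → M → ℝ}

theorem continuous_cost (hc : ContinuousOn (fun p : ℝ × M × M => c p.1 p.2.1 p.2.2) {p | 0 < p.1})
    {t : ℝ} (ht : 0 < t) : Continuous fun p : M × M => c t p.1 p.2 :=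
  continuousOn_univ.1 <| hc.comp (continuous_const.prodMk continuous_id).continuousOn
    fun _ _ => ht

theorem continuous_cost_add_cost (hcont : ∀ t, 0 < t → Continuous fun p : M × M => c t p.1 p.2)
    {s t : ℝ} (hs : 0 < s) (ht : 0 < t) (x z : M) : Continuous fun y => c s x y + c t y z :=
  ((hcont s hs).comp (.prodMk_right x)).add ((hcont t ht).comp (.prodMk_left z))

variable [CompactSpace M]

theorem cost_add_le (hcont : ∀ t, 0 < t → Continuous fun p : M × M => c t p.1 p.2)
    (hdpp : ∀ s t : ℝ, 0 < s → 0 < t → ∀ x y : M,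
      c (s + t) x y = ⨅ z : M, (c s x z + c t z y))
    {s t : ℝ} (hs : 0 < s) (ht : 0 < t) (x y z : M) : c (s + t) x z ≤ c s x y + c t y z := by
  rw [hdpp s t hs ht]
  exact ciInf_le (isCompact_range (continuous_cost_add_cost hcont hs ht x z)).bddBelow y

theorem exists_cost_add_eq [Nonempty M]
    (hcont : ∀ t, 0 < t → Continuous fun p : M × M => c t p.1 p.2)
    (hdpp : ∀ s t : ℝ, 0 < s → 0 < t → ∀ x y : M,
      c (s + t) x y = ⨅ z : M, (c s x z + c t z y))
    {s t : ℝ} (hs : 0 < s) (ht : 0 < t) (x z : M) : ∃ y, c (s + t) x z = c s x y + c t y z := by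
  obtain ⟨y, -, hy⟩ := isCompact_univ.exists_isMinOn univ_nonempty
    (continuous_cost_add_cost hcont hs ht x z).continuousOn
  refine ⟨y, le_antisymm (cost_add_le hcont hdpp hs ht x y z) ?_⟩
  rw [hdpp s t hs ht]
  exact le_ciInf fun w => hy (mem_univ w)

theorem exists_chain_cost_eq [Nonempty M]
    (hcont : ∀ t, 0 < t → Continuous fun p : M × M => c t p.1 p.2)
    (hdpp : ∀ s t : ℝ, 0 < s → 0 < t → ∀ x y : M,
      c (s + t) x y = ⨅ z : M, (c s x z + c t z y))
    {T : ℝ} (hT : 0 < T) (n : ℕ) (x y : M) :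
    ∃ z : ℕ → M, z 0 = x ∧ z (n + 1) = y ∧
      ∑ i ∈ range (n + 1), c T (z i) (z (i + 1)) = c ((n + 1) * T) x y := by
  induction n generalizing x with
  | zero => exact ⟨fun i => if i = 0 then x else y, by simp, by simp, by simp⟩
  | succ n ih =>
    obtain ⟨w, hw⟩ := exists_cost_add_eq hcont hdpp hT (by positivity : 0 < (n + 1) * T) x y
    obtain ⟨z, hz0, hzn, hz⟩ := ih w
    refine ⟨fun i => if i = 0 then x else z (i - 1), by simp, by simpa using hzn, ?_⟩
    rw [sum_range_succ', show ((n + 1 : ℕ) + 1 : ℝ) * T = T + (n + 1) * T by push_cast; ring, hw,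
      ← hz, ← hz0]
    simp [add_comm]

end Cost

section MatherConstant

variable {M : Type*} {c : ℝ → M → M → ℝ} {h K : ℝ}

/-- Restricting to `t ≥ 1` is what makes this subsolution bounded (by `K`). -/
noncomputable def kamSubsolution (c : ℝ → M → M → ℝ) (h : ℝ) (y : M) : ℝ :=
  ⨅ p : Ici (1 : ℝ) × M, (c p.1 p.2 y - h * p.1)

theorem bddBelow_range_cost_sub (hbound : ∀ t : ℝ, 1 ≤ t → ∀ x y : M, |c t x y - h * t| ≤ K)
    (y : M) : BddBelow (range fun p : Ici (1 : ℝ) × M => c p.1 p.2 y - h * p.1) :=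
  ⟨-K, by rintro _ ⟨⟨⟨t, ht⟩, x⟩, rfl⟩; exact (abs_le.1 (hbound t ht x y)).1⟩

theorem kamSubsolution_le (hbound : ∀ t : ℝ, 1 ≤ t → ∀ x y : M, |c t x y - h * t| ≤ K)
    {t : ℝ} (ht : 1 ≤ t) (x y : M) : kamSubsolution c h y ≤ c t x y - h * t :=
  ciInf_le (bddBelow_range_cost_sub hbound y) (⟨t, ht⟩, x)

theorem abs_kamSubsolution_le [Nonempty M]
    (hbound : ∀ t : ℝ, 1 ≤ t → ∀ x y : M, |c t x y - h * t| ≤ K) (y : M) :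
    |kamSubsolution c h y| ≤ K := by
  refine abs_le.2 ⟨le_ciInf fun ⟨⟨t, ht⟩, x⟩ => (abs_le.1 (hbound t ht x y)).1, ?_⟩
  have h₁ := kamSubsolution_le hbound le_rfl y y
  have h₂ := (abs_le.1 (hbound 1 le_rfl y y)).2
  linarith

theorem measurable_kamSubsolution [TopologicalSpace M] [MeasurableSpace M]
    [OpensMeasurableSpace M] (hcont : ∀ t, 0 < t → Continuous fun p : M × M => c t p.1 p.2)
    (hbound : ∀ t : ℝ, 1 ≤ t → ∀ x y : M, |c t x y - h * t| ≤ K) :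
    Measurable (kamSubsolution c h) := by
  refine (upperSemicontinuous_ciInf (bddBelow_range_cost_sub hbound) ?_).measurable
  rintro ⟨⟨t, ht⟩, x⟩
  have ht₀ : 0 < t := by linarith [mem_Ici.1 ht]
  exact (((hcont t ht₀).comp (.prodMk_right x)).sub continuous_const).upperSemicontinuous

theorem kamSubsolution_le_add [TopologicalSpace M] [CompactSpace M] [Nonempty M]
    (hcont : ∀ t, 0 < t → Continuous fun p : M × M => c t p.1 p.2)
    (hdpp : ∀ s t : ℝ, 0 < s → 0 < t → ∀ x y : M,
      c (s + t) x y = ⨅ z : M, (c s x z + c t z y))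
    (hbound : ∀ t : ℝ, 1 ≤ t → ∀ x y : M, |c t x y - h * t| ≤ K)
    {T : ℝ} (hT : 0 < T) (y z : M) :
    kamSubsolution c h z ≤ kamSubsolution c h y + c T y z - h * T := by
  suffices kamSubsolution c h z - (c T y z - h * T) ≤ kamSubsolution c h y by linarith
  refine le_ciInf fun ⟨⟨t, ht⟩, x⟩ => ?_
  have h₁ := kamSubsolution_le hbound (by linarith [mem_Ici.1 ht] : 1 ≤ t + T) x z
  have h₂ := cost_add_le hcont hdpp (by linarith [mem_Ici.1 ht] : 0 < t) hT x y z
  dsimp only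
  linarith

theorem mul_le_integral_cost [TopologicalSpace M] [SecondCountableTopology M] [CompactSpace M]
    [Nonempty M] [MeasurableSpace M] [OpensMeasurableSpace M]
    (hcont : ∀ t, 0 < t → Continuous fun p : M × M => c t p.1 p.2)
    (hdpp : ∀ s t : ℝ, 0 < s → 0 < t → ∀ x y : M,
      c (s + t) x y = ⨅ z : M, (c s x z + c t z y))
    (hbound : ∀ t : ℝ, 1 ≤ t → ∀ x y : M, |c t x y - h * t| ≤ K)
    {T : ℝ} (hT : 0 < T) {μ : Measure M} [IsFiniteMeasure μ] {P : Measure (M × M)}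
    [IsProbabilityMeasure P] (hP : IsCoupling P μ μ) :
    h * T ≤ ∫ p, c T p.1 p.2 ∂P :=
  le_integral_of_forall_le_add hP
    ((hcont T hT).integrable_of_hasCompactSupport (.of_compactSpace _))
    (.of_bound (measurable_kamSubsolution hcont hbound).aestronglyMeasurable K
      (ae_of_all _ (abs_kamSubsolution_le hbound)))
    (kamSubsolution_le_add hcont hdpp hbound hT)

/-- The uniform measure on a closed chain realising `c_{(n+1)T}(x, x)`. -/
theorem exists_transportCost_self_le [TopologicalSpace M] [SecondCountableTopology M]
    [CompactSpace M] [Nonempty M] [MeasurableSpace M] [OpensMeasurableSpace M]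
    [MeasurableSingletonClass (M × M)]
    (hcont : ∀ t, 0 < t → Continuous fun p : M × M => c t p.1 p.2)
    (hdpp : ∀ s t : ℝ, 0 < s → 0 < t → ∀ x y : M,
      c (s + t) x y = ⨅ z : M, (c s x z + c t z y))
    (hbound : ∀ t : ℝ, 1 ≤ t → ∀ x y : M, |c t x y - h * t| ≤ K)
    {T : ℝ} (hT : 0 < T) (n : ℕ) (hn : 1 ≤ (n + 1) * T) :
    ∃ μ : Measure M, IsProbabilityMeasure μ ∧ transportCost (c T) μ μ ≤ h * T + K / (n + 1) := by
  let x := Classical.arbitrary M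
  obtain ⟨z, hz0, hzn, hz⟩ := exists_chain_cost_eq hcont hdpp hT n x x
  refine ⟨chainMeasure (n + 1) z, inferInstance, ?_⟩
  calc transportCost (c T) (chainMeasure (n + 1) z) (chainMeasure (n + 1) z)
      ≤ ∫ p, c T p.1 p.2 ∂chainMeasure (n + 1) fun i => (z i, z (i + 1)) :=
        transportCost_le (fun _ _ hP => mul_le_integral_cost hcont hdpp hbound hT hP)
          (isCoupling_chainMeasure_succ (hzn.trans hz0.symm))
    _ = ((n : ℝ) + 1)⁻¹ * c ((n + 1) * T) x x := by
        rw [integral_chainMeasure (n + 1) _ fun p : M × M => c T p.1 p.2, hz]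
        push_cast
        rfl
    _ ≤ ((n : ℝ) + 1)⁻¹ * (h * ((n + 1) * T) + K) := by
        gcongr
        linarith [(abs_le.1 (hbound _ hn x x)).2]
    _ = h * T + K / (n + 1) := by field_simp

end MatherConstant

theorem mather_constant_eq_general
    (M : Type*) [MetricSpace M] [CompactSpace M] [Nonempty M]
    [MeasurableSpace M] [BorelSpace M]
    (c : ℝ → M → M → ℝ)
    (hc : ContinuousOn (fun p : ℝ × M × M => c p.1 p.2.1 p.2.2) {p | 0 < p.1})
    (hdpp : ∀ s t : ℝ, 0 < s → 0 < t → ∀ x y : M,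
      c (s + t) x y = ⨅ z : M, (c s x z + c t z y))
    (h K : ℝ)
    (hbound : ∀ t : ℝ, 1 ≤ t → ∀ x y : M, |c t x y - h * t| ≤ K) :
    ∀ T : ℝ, 0 < T →
      sInf {r : ℝ | ∃ μ : Measure M, IsProbabilityMeasure μ ∧
        r = (1 / T) * transportCost (c T) μ μ} = h := by
  intro T hT
  have hcont : ∀ t, 0 < t → Continuous fun p : M × M => c t p.1 p.2 := fun _ => continuous_cost hc
  have hlow : h ∈ lowerBounds {r : ℝ | ∃ μ : Measure M, IsProbabilityMeasure μ ∧
      r = (1 / T) * transportCost (c T) μ μ} := by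
    rintro _ ⟨μ, _, rfl⟩
    rw [one_div, le_inv_mul_iff₀ hT, mul_comm]
    exact le_transportCost fun _ _ hP => mul_le_integral_cost hcont hdpp hbound hT hP
  refine le_antisymm ?_
    (le_csInf ⟨_, Measure.dirac (Classical.arbitrary M), inferInstance, rfl⟩ hlow)
  have hlim : Tendsto (fun n : ℕ => 1 / T * (h * T + K / ((n : ℝ) + 1))) atTop (𝓝 h) := by
    have := ((tendsto_one_div_add_atTop_nhds_zero_nat.const_mul K).const_add (h * T)).const_mul
      (1 / T)
    field_simp at this ⊢
    simpa [hT.ne'] using this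
  obtain ⟨N, hN⟩ := exists_nat_ge (1 / T)
  refine ge_of_tendsto hlim (eventually_atTop.2 ⟨N, fun n hn => ?_⟩)
  have hnT : 1 ≤ (n + 1) * T := by
    rw [← div_le_iff₀ hT]
    exact hN.trans (by exact_mod_cast hn.trans n.le_succ)
  obtain ⟨μ, hμ, hcost⟩ := exists_transportCost_self_le hcont hdpp hbound hT n hnT
  exact (csInf_le ⟨h, hlow⟩ ⟨μ, hμ, rfl⟩).trans (mul_le_mul_of_nonneg_left hcost (by positivity))

/-- **The Mather constant equals the weak KAM constant** (Theorem `alpha`): on a compact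
metric space `M` with continuous cost `c` satisfying the dynamic programming identity,
if `|c_t(x,y) − h t| ≤ K` for all `t ≥ 1` and all `x, y`, then for every `T > 0`,
`α_T := inf_μ (1/T) C_T(μ,μ)` over Borel probability measures `μ` equals `h`. -/
theorem mather_constant_eq
    (M : Type*) [MetricSpace M] [CompactSpace M] [Nonempty M]
    [MeasurableSpace M] [BorelSpace M]
    (c : ℝ → M → M → ℝ)
    (hc : ContinuousOn (fun p : ℝ × M × M => c p.1 p.2.1 p.2.2) {p | 0 < p.1})
    (hdpp : ∀ s t : ℝ, 0 < s → 0 < t → ∀ x y : M,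
      c (s + t) x y = ⨅ z : M, (c s x z + c t z y))
    (h K : ℝ) (hK : 0 < K)
    (hbound : ∀ t : ℝ, 1 ≤ t → ∀ x y : M, |c t x y - h * t| ≤ K) :
    ∀ T : ℝ, 0 < T →
      sInf {r : ℝ | ∃ μ : Measure M, IsProbabilityMeasure μ ∧
        r = (1 / T) * transportCost (c T) μ μ} = h :=
  mather_constant_eq_general M c hc hdpp h K hbound
end
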